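/- Let Z ∈ ℂ^{n1×n2×n3} admit a skinny transformed tensor SVD Z = U ⋄ S ⋄ Vᴴ with transformed multi-rank (r_1,…,r_{n3}) satisfying Σ_t r_t ≥ 1 and the tensor incoherence conditions with parameter μ ≥ 1, and let T be the subspace determined by U and V. Let ρ ∈ (0,1], fix (i,j,k), and for δ ∈ {0,1} define the linear map T^{ijk}_δ on ℂ^{n1×n2×n3} by T^{ijk}_δ(X) = ρ^{−1} δ ⟨P_T(E_ijk), X⟩ P_T(E_ijk). Then ‖T^{ijk}_δ − (1/(n1 n2 n3)) P_T‖_op ≤ 2μ(Σ_{t=1}^{n3} r_t)/(n_(2) n_3 ρ). -/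

import Mathlib

open scoped BigOperators ComplexConjugate
open MeasureTheory Matrix

noncomputable section

/-- A third-order complex tensor. -/
abbrev Tensor (n1 n2 n3 : ℕ) : Type := Fin n1 → Fin n2 → Fin n3 → ℂ

namespace Tensor

variable {n1 n2 n3 n4 r : ℕ}

/-- The `t`-th frontal slice of the transformed tensor `Φ[A]`. -/
def slice (Φ : Matrix (Fin n3) (Fin n3) ℂ) (A : Tensor n1 n2 n3) (t : Fin n3) :
    Matrix (Fin n1) (Fin n2) ℂ :=
  Matrix.of fun i j => ∑ k, Φ t k * A i j k

/-- Reconstruct a tensor from its transformed frontal slices (inverse transform `Φᴴ[·]`). -/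
def unslice (Φ : Matrix (Fin n3) (Fin n3) ℂ)
    (M : Fin n3 → Matrix (Fin n1) (Fin n2) ℂ) : Tensor n1 n2 n3 :=
  fun i j k => ∑ t, (starRingEnd ℂ) (Φ t k) * M t i j

/-- The Φ-product `A ⋄ B`. -/
def tprod (Φ : Matrix (Fin n3) (Fin n3) ℂ) (A : Tensor n1 n2 n3) (B : Tensor n2 n4 n3) :
    Tensor n1 n4 n3 :=
  unslice Φ fun t => slice Φ A t * slice Φ B t

/-- The conjugate transpose `Aᴴ` with respect to `Φ`. -/
def tconj (Φ : Matrix (Fin n3) (Fin n3) ℂ) (A : Tensor n1 n2 n3) : Tensor n2 n1 n3 :=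
  unslice Φ fun t => (slice Φ A t)ᴴ

/-- Frobenius norm of a tensor. -/
def frob (A : Tensor n1 n2 n3) : ℝ :=
  Real.sqrt (∑ i, ∑ j, ∑ k, Complex.normSq (A i j k))

/-- Entrywise inner product `⟨A, B⟩ = Σ conj(A) B`. -/
def tinner (A B : Tensor n1 n2 n3) : ℂ :=
  ∑ i, ∑ j, ∑ k, (starRingEnd ℂ) (A i j k) * B i j k

/-- `‖A‖_∞`, the max modulus of the entries. -/
def inftyNorm (A : Tensor n1 n2 n3) : ℝ :=
  ⨆ i, ⨆ j, ⨆ k, ‖A i j k‖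

/-- `‖A‖_{∞,2}`. -/
def infty2Norm (A : Tensor n1 n2 n3) : ℝ :=
  max (⨆ i : Fin n1, Real.sqrt (∑ b, ∑ k, Complex.normSq (A i b k)))
      (⨆ j : Fin n2, Real.sqrt (∑ a, ∑ k, Complex.normSq (A a j k)))

/-- The weighted norm `‖A‖_{∞,w}` for a weight vector `w`. -/
def inftyWNorm (w : Fin n3 → ℝ) (A : Tensor n1 n2 n3) : ℝ :=
  max (⨆ i : Fin n1, Real.sqrt (∑ b, ∑ k, (w k) ^ 2 * Complex.normSq (A i b k)))
      (⨆ j : Fin n2, Real.sqrt (∑ a, ∑ k, (w k) ^ 2 * Complex.normSq (A a j k)))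

/-- Spectral norm of a complex matrix (ℓ²→ℓ² operator norm). -/
def specNormM {m n : ℕ} (M : Matrix (Fin m) (Fin n) ℂ) : ℝ :=
  ‖LinearMap.toContinuousLinearMap (Matrix.toEuclideanLin M)‖

/-- Nuclear norm of a complex matrix: the sum of its singular values. -/
def nuclearNormM {m n : ℕ} (M : Matrix (Fin m) (Fin n) ℂ) : ℝ :=
  ∑ i, Real.sqrt ((Matrix.isHermitian_conjTranspose_mul_self M).eigenvalues i)

/-- Tensor spectral norm: max of spectral norms of transformed frontal slices. -/
def specNorm (Φ : Matrix (Fin n3) (Fin n3) ℂ) (A : Tensor n1 n2 n3) : ℝ :=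
  ⨆ t, specNormM (slice Φ A t)

/-- Transformed tensor nuclear norm. -/
def ttnn (Φ : Matrix (Fin n3) (Fin n3) ℂ) (A : Tensor n1 n2 n3) : ℝ :=
  ∑ t, nuclearNormM (slice Φ A t)

/-- The sampling projection `P_Ω`. -/
def projOmega (Ω : Set (Fin n1 × Fin n2 × Fin n3)) (A : Tensor n1 n2 n3) :
    Tensor n1 n2 n3 :=
  fun i j k => Ω.indicator (fun p => A p.1 p.2.1 p.2.2) (i, j, k)

/-- The column-basis tensor `e_ik ∈ ℂ^{n×1×n3}`. -/
def colBasis {n n3 : ℕ} (i : Fin n) (k : Fin n3) : Tensor n 1 n3 :=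
  fun a _ c => if a = i ∧ c = k then 1 else 0

/-- The unit tensor `E_ijk`. -/
def unitTensor (i : Fin n1) (j : Fin n2) (k : Fin n3) : Tensor n1 n2 n3 :=
  fun a b c => if a = i ∧ b = j ∧ c = k then 1 else 0

/-- The orthogonal projection `P_T` onto the subspace `T` determined by `U, V`. -/
def projT (Φ : Matrix (Fin n3) (Fin n3) ℂ) (U : Tensor n1 r n3) (V : Tensor n2 r n3)
    (X : Tensor n1 n2 n3) : Tensor n1 n2 n3 :=
  tprod Φ (tprod Φ U (tconj Φ U)) X + tprod Φ X (tprod Φ V (tconj Φ V))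
    - tprod Φ (tprod Φ (tprod Φ U (tconj Φ U)) X) (tprod Φ V (tconj Φ V))

/-- `P_{T⊥}(X) = X - P_T(X)`. -/
def projTperp (Φ : Matrix (Fin n3) (Fin n3) ℂ) (U : Tensor n1 r n3) (V : Tensor n2 r n3)
    (X : Tensor n1 n2 n3) : Tensor n1 n2 n3 :=
  X - projT Φ U V X

/-- Operator norm of a map on tensors, w.r.t. the Frobenius norm. -/
def opNorm (L : Tensor n1 n2 n3 → Tensor n1 n2 n3) : ℝ :=
  sSup ((fun X => frob (L X)) '' {X | frob X ≤ 1})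

/-- A skinny transformed tensor SVD `Z = U ⋄ S ⋄ Vᴴ`. -/
structure SkinnySVD (Φ : Matrix (Fin n3) (Fin n3) ℂ) (Z : Tensor n1 n2 n3) (r : ℕ)
    (U : Tensor n1 r n3) (S : Tensor r r n3) (V : Tensor n2 r n3) : Prop where
  factor : Z = tprod Φ (tprod Φ U S) (tconj Φ V)
  U_orth : ∀ t, (slice Φ U t)ᴴ * slice Φ U t = 1
  V_orth : ∀ t, (slice Φ V t)ᴴ * slice Φ V t = 1
  S_offdiag : ∀ t i j, i ≠ j → slice Φ S t i j = 0
  S_diag_real_nonneg : ∀ t i, (slice Φ S t i i).im = 0 ∧ 0 ≤ (slice Φ S t i i).re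

/-- The tensor incoherence conditions with parameter μ. -/
def Incoherent (Φ : Matrix (Fin n3) (Fin n3) ℂ) (Z : Tensor n1 n2 n3)
    (U : Tensor n1 r n3) (V : Tensor n2 r n3) (μ : ℝ) : Prop :=
  (∀ (i : Fin n1) (k : Fin n3),
      (frob (tprod Φ (tconj Φ U) (colBasis i k))) ^ 2
        ≤ μ * (∑ t, ((slice Φ Z t).rank : ℝ)) / (n1 * n3)) ∧
  (∀ (j : Fin n2) (k : Fin n3),
      (frob (tprod Φ (tconj Φ V) (colBasis j k))) ^ 2
        ≤ μ * (∑ t, ((slice Φ Z t).rank : ℝ)) / (n2 * n3))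

/-- Bernoulli measure on `Bool` with success probability ρ. -/
def berMeasure (ρ : ℝ) : Measure Bool :=
  ρ.toNNReal • Measure.dirac true + (1 - ρ).toNNReal • Measure.dirac false

instance (ρ : ℝ) : IsFiniteMeasure (berMeasure ρ) := by
  unfold berMeasure; infer_instance

/-- The i.i.d. Bernoulli sampling model `Ω ~ Ber(ρ)`. -/
def berPi (n1 n2 n3 : ℕ) (ρ : ℝ) : Measure ((Fin n1 × Fin n2 × Fin n3) → Bool) :=
  Measure.pi fun _ => berMeasure ρ

/-- The random set `Ω` determined by a Bernoulli sample. -/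
def omegaSet {n1 n2 n3 : ℕ} (ω : (Fin n1 × Fin n2 × Fin n3) → Bool) :
    Set (Fin n1 × Fin n2 × Fin n3) := {p | ω p = true}

end Tensor

open Tensor



/-!
Since `Φ` is unitary, the transform is an isometry for `⟨·,·⟩`, and on the `t`-th transformed
slice `P_T` acts as `M ↦ Pu M + M Pv - Pu M Pv` with the orthogonal projections `Pu = U_t U_tᴴ`,
`Pv = V_t V_tᴴ`; hence `P_T` is an orthogonal projection. With `P = P_T(E_ijk)` the operator
`X ↦ s ⟨P, X⟩ P - c P_T X` only sees `Y = P_T X`, and for any two vectors of an inner product space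
`‖s ⟨p, y⟩ p - c y‖ ≤ max (s ‖p‖²) c ‖y‖` (expand the square and apply Cauchy–Schwarz).
Finally `‖P‖² = ⟨P, E_ijk⟩ ≤ ‖Uᴴ ⋄ e_ik‖² + ‖Vᴴ ⋄ e_jk‖²`, which incoherence bounds by
`2μ Σ r_t / (n_(2) n3)`, while `1 / (n1 n2 n3)` lies below the bound because `Σ r_t ≥ 1`.
-/

section InnerProduct

variable {𝕜 E : Type*} [RCLike 𝕜] [NormedAddCommGroup E] [InnerProductSpace 𝕜 E]

open RCLike

theorem norm_le_of_inner_self_eq_inner {x y : E} (h : inner 𝕜 y y = inner 𝕜 y x) :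
    ‖y‖ ≤ ‖x‖ := by
  have hsq : ‖y‖ ^ 2 ≤ ‖y‖ * ‖x‖ := by
    calc ‖y‖ ^ 2 = re (inner 𝕜 y x) := by
          rw [← h, inner_self_eq_norm_sq_to_K]; norm_cast
      _ ≤ ‖inner 𝕜 y x‖ := re_le_norm _
      _ ≤ ‖y‖ * ‖x‖ := norm_inner_le_norm _ _
  nlinarith [norm_nonneg x, norm_nonneg y]

theorem norm_smul_inner_smul_sub_smul_le (p y : E) {s c : ℝ} (hs : 0 ≤ s) (hc : 0 ≤ c) :
    ‖((s : 𝕜) * inner 𝕜 p y) • p - (c : 𝕜) • y‖ ≤ max (s * ‖p‖ ^ 2) c * ‖y‖ := by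
  set α := inner 𝕜 p y with hα_def
  have hα : ‖α‖ ≤ ‖p‖ * ‖y‖ := norm_inner_le_norm (𝕜 := 𝕜) p y
  have hinner : inner 𝕜 (((s : 𝕜) * α) • p) ((c : 𝕜) • y) = ((s * c * ‖α‖ ^ 2 : ℝ) : 𝕜) := by
    rw [inner_smul_left, inner_smul_right, map_mul, conj_ofReal, ← hα_def]
    push_cast
    linear_combination (s * c : 𝕜) * RCLike.conj_mul α
  have hexpand : ‖((s : 𝕜) * α) • p - (c : 𝕜) • y‖ ^ 2
      = ‖α‖ ^ 2 * (s * (s * ‖p‖ ^ 2 - 2 * c)) + c ^ 2 * ‖y‖ ^ 2 := by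
    rw [norm_sub_sq (𝕜 := 𝕜), hinner, ofReal_re, norm_smul, norm_smul, norm_mul, norm_ofReal,
      norm_ofReal, abs_of_nonneg hs, abs_of_nonneg hc]
    ring
  set m := max (s * ‖p‖ ^ 2) c
  have hcm : c ≤ m := le_max_right _ _
  have hbound : ‖α‖ ^ 2 * (s * (s * ‖p‖ ^ 2 - 2 * c)) + c ^ 2 * ‖y‖ ^ 2 ≤ (m * ‖y‖) ^ 2 := by
    rcases le_total 0 (s * (s * ‖p‖ ^ 2 - 2 * c)) with hcoef | hcoef
    · -- the coefficient of `‖α‖²` is nonnegative, so Cauchy–Schwarz gives the worst case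
      calc ‖α‖ ^ 2 * (s * (s * ‖p‖ ^ 2 - 2 * c)) + c ^ 2 * ‖y‖ ^ 2
          ≤ (‖p‖ * ‖y‖) ^ 2 * (s * (s * ‖p‖ ^ 2 - 2 * c)) + c ^ 2 * ‖y‖ ^ 2 := by
            gcongr
        _ = ((s * ‖p‖ ^ 2 - c) * ‖y‖) ^ 2 := by ring
        _ = (|s * ‖p‖ ^ 2 - c| * ‖y‖) ^ 2 := by rw [mul_pow, mul_pow, sq_abs]
        _ ≤ (m * ‖y‖) ^ 2 := by
            have : 0 ≤ s * ‖p‖ ^ 2 := by positivity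
            gcongr
            exact abs_sub_le_iff.2 ⟨by linarith [le_max_left (s * ‖p‖ ^ 2) c], by linarith⟩
    · have : ‖α‖ ^ 2 * (s * (s * ‖p‖ ^ 2 - 2 * c)) ≤ 0 :=
        mul_nonpos_of_nonneg_of_nonpos (by positivity) hcoef
      have : c ^ 2 * ‖y‖ ^ 2 ≤ (m * ‖y‖) ^ 2 := by rw [mul_pow]; gcongr
      linarith
  exact (pow_le_pow_iff_left₀ (norm_nonneg _) (mul_nonneg (hc.trans hcm) (norm_nonneg y))
    two_ne_zero).1 (hexpand ▸ hbound)

end InnerProduct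

namespace Matrix

variable {a b c : Type*} [Fintype a] [Fintype b] [Fintype c]

def frobInner (M N : Matrix a b ℂ) : ℂ :=
  ∑ i, ∑ j, (starRingEnd ℂ) (M i j) * N i j

def frobNormSq (M : Matrix a b ℂ) : ℝ :=
  ∑ i, ∑ j, Complex.normSq (M i j)

theorem frobNormSq_nonneg (M : Matrix a b ℂ) : 0 ≤ M.frobNormSq :=
  Finset.sum_nonneg fun _ _ => Finset.sum_nonneg fun _ _ => Complex.normSq_nonneg _

theorem frobInner_self (M : Matrix a b ℂ) : frobInner M M = M.frobNormSq := by
  simp only [frobInner, frobNormSq, Complex.ofReal_sum, Complex.normSq_eq_conj_mul_self]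

theorem frobInner_eq_trace (M N : Matrix a b ℂ) : frobInner M N = trace (Mᴴ * N) := by
  simp only [frobInner, trace, diag, mul_apply, conjTranspose_apply, Complex.star_def]
  exact Finset.sum_comm

theorem frobInner_add_left (M M' N : Matrix a b ℂ) :
    frobInner (M + M') N = frobInner M N + frobInner M' N := by
  simp [frobInner_eq_trace, Matrix.add_mul, trace_add]

theorem frobInner_sub_left (M M' N : Matrix a b ℂ) :
    frobInner (M - M') N = frobInner M N - frobInner M' N := by
  simp [frobInner_eq_trace, Matrix.sub_mul, trace_sub]

theorem frobInner_add_right (M N N' : Matrix a b ℂ) :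
    frobInner M (N + N') = frobInner M N + frobInner M N' := by
  simp [frobInner_eq_trace, Matrix.mul_add, trace_add]

theorem frobInner_sub_right (M N N' : Matrix a b ℂ) :
    frobInner M (N - N') = frobInner M N - frobInner M N' := by
  simp [frobInner_eq_trace, Matrix.mul_sub, trace_sub]

theorem frobInner_mul_left (P : Matrix c a ℂ) (M : Matrix a b ℂ) (N : Matrix c b ℂ) :
    frobInner (P * M) N = frobInner M (Pᴴ * N) := by
  rw [frobInner_eq_trace, frobInner_eq_trace, conjTranspose_mul, Matrix.mul_assoc]

theorem frobInner_mul_right (P : Matrix b c ℂ) (M : Matrix a b ℂ) (N : Matrix a c ℂ) :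
    frobInner (M * P) N = frobInner M (N * Pᴴ) := by
  rw [frobInner_eq_trace, frobInner_eq_trace, conjTranspose_mul, Matrix.mul_assoc,
    trace_mul_comm, Matrix.mul_assoc]

def tangentProj (Pu : Matrix a a ℂ) (Pv : Matrix b b ℂ) (M : Matrix a b ℂ) : Matrix a b ℂ :=
  Pu * M + M * Pv - Pu * M * Pv

theorem frobInner_tangentProj_left {Pu : Matrix a a ℂ} {Pv : Matrix b b ℂ}
    (hu : Puᴴ = Pu) (hv : Pvᴴ = Pv) (M N : Matrix a b ℂ) :
    frobInner (tangentProj Pu Pv M) N = frobInner M (tangentProj Pu Pv N) := by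
  have e1 : frobInner (Pu * M) N = frobInner M (Pu * N) := by rw [frobInner_mul_left, hu]
  have e2 : frobInner (M * Pv) N = frobInner M (N * Pv) := by rw [frobInner_mul_right, hv]
  have e3 : frobInner (Pu * M * Pv) N = frobInner M (Pu * N * Pv) := by
    rw [frobInner_mul_right, hv, frobInner_mul_left, hu, Matrix.mul_assoc]
  simp only [tangentProj, frobInner_sub_left, frobInner_add_left, frobInner_sub_right,
    frobInner_add_right, e1, e2, e3]

theorem tangentProj_idem {Pu : Matrix a a ℂ} {Pv : Matrix b b ℂ}
    (hu : Pu * Pu = Pu) (hv : Pv * Pv = Pv) (M : Matrix a b ℂ) :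
    tangentProj Pu Pv (tangentProj Pu Pv M) = tangentProj Pu Pv M := by
  have h1 : Pu * tangentProj Pu Pv M = Pu * M := by
    simp only [tangentProj, Matrix.mul_add, Matrix.mul_sub, ← Matrix.mul_assoc, hu]
    abel
  have h2 : tangentProj Pu Pv M * Pv = M * Pv := by
    simp only [tangentProj, Matrix.add_mul, Matrix.sub_mul, Matrix.mul_assoc, hv]
    abel
  rw [tangentProj, h1, h2, tangentProj]

theorem frobInner_tangentProj_tangentProj {Pu : Matrix a a ℂ} {Pv : Matrix b b ℂ}
    (hu : IsStarProjection Pu) (hv : IsStarProjection Pv) (M N : Matrix a b ℂ) :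
    frobInner (tangentProj Pu Pv M) (tangentProj Pu Pv N)
      = frobInner (tangentProj Pu Pv M) N := by
  rw [← frobInner_tangentProj_left hu.isSelfAdjoint hv.isSelfAdjoint,
    tangentProj_idem hu.isIdempotentElem hv.isIdempotentElem]

theorem isStarProjection_mul_conjTranspose_self [DecidableEq c] {W : Matrix a c ℂ}
    (hW : Wᴴ * W = 1) : IsStarProjection (W * Wᴴ) where
  isIdempotentElem := by
    rw [IsIdempotentElem, Matrix.mul_assoc, ← Matrix.mul_assoc Wᴴ, hW, Matrix.one_mul]
  isSelfAdjoint := by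
    rw [IsSelfAdjoint, star_eq_conjTranspose, conjTranspose_mul, conjTranspose_conjTranspose]

theorem re_frobInner_tangentProj_self_le (W : Matrix a c ℂ) (Y : Matrix b c ℂ)
    (M : Matrix a b ℂ) :
    (frobInner (tangentProj (W * Wᴴ) (Y * Yᴴ) M) M).re
      ≤ (Wᴴ * M).frobNormSq + (M * Y).frobNormSq := by
  have e1 : frobInner ((W * Wᴴ) * M) M = (Wᴴ * M).frobNormSq := by
    rw [Matrix.mul_assoc, frobInner_mul_left, frobInner_self]
  have e2 : frobInner (M * (Y * Yᴴ)) M = (M * Y).frobNormSq := by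
    rw [← Matrix.mul_assoc, frobInner_mul_right, conjTranspose_conjTranspose, frobInner_self]
  have e3 : frobInner ((W * Wᴴ) * M * (Y * Yᴴ)) M = (Wᴴ * M * Y).frobNormSq := by
    rw [show W * Wᴴ * M * (Y * Yᴴ) = W * (Wᴴ * M * Y * Yᴴ) by simp only [Matrix.mul_assoc],
      frobInner_mul_left, frobInner_mul_right, conjTranspose_conjTranspose, frobInner_self]
  rw [tangentProj, frobInner_sub_left, frobInner_add_left, e1, e2, e3]
  simp only [Complex.add_re, Complex.sub_re, Complex.ofReal_re]
  linarith [frobNormSq_nonneg (Wᴴ * M * Y)]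

theorem frobNormSq_mul_single [DecidableEq a] [DecidableEq c] (M : Matrix b a ℂ) (i : a) (j : c)
    (z : ℂ) : (M * single i j z).frobNormSq = ∑ s, Complex.normSq (M s i * z) := by
  refine Finset.sum_congr rfl fun s _ => ?_
  rw [Finset.sum_eq_single j (fun y _ hy => by rw [mul_single_apply_of_ne _ _ _ _ _ hy,
    map_zero]) (by simp), mul_single_apply_same]

theorem frobNormSq_single_mul [DecidableEq a] [DecidableEq c] (i : c) (j : a) (z : ℂ)
    (M : Matrix a b ℂ) : (single i j z * M).frobNormSq = ∑ s, Complex.normSq (z * M j s) := by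
  rw [frobNormSq, Finset.sum_eq_single i (fun x _ hx => Finset.sum_eq_zero fun y _ => by
    rw [single_mul_apply_of_ne _ _ _ _ _ hx, map_zero]) (by simp)]
  simp only [single_mul_apply_same]

end Matrix

theorem pos_of_one_le_sum_rank {R : Type*} [CommRing R] [StrongRankCondition R] {m n p : ℕ}
    (M : Fin p → Matrix (Fin m) (Fin n) R)
    (h : 1 ≤ ∑ t, (M t).rank) : 0 < m ∧ 0 < n ∧ 0 < p := by
  refine ⟨Nat.pos_of_ne_zero fun hm => ?_, Nat.pos_of_ne_zero fun hn => ?_,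
    Nat.pos_of_ne_zero fun hp => ?_⟩
  · have := fun t => (M t).rank_le_height
    simp_all
  · have := fun t => (M t).rank_le_width
    simp_all
  · subst hp
    simp at h

namespace Tensor

variable {n1 n2 n3 n4 r : ℕ}

def toEuclidean (A : Tensor n1 n2 n3) : EuclideanSpace ℂ (Fin n1 × Fin n2 × Fin n3) :=
  WithLp.toLp 2 fun p => A p.1 p.2.1 p.2.2

theorem inner_toEuclidean (A B : Tensor n1 n2 n3) :
    inner ℂ (toEuclidean A) (toEuclidean B) = tinner A B := by
  simp only [toEuclidean, PiLp.inner_apply, RCLike.inner_apply', tinner, Fintype.sum_prod_type]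

theorem norm_toEuclidean (A : Tensor n1 n2 n3) : ‖toEuclidean A‖ = frob A := by
  simp only [EuclideanSpace.norm_eq, toEuclidean, frob, Fintype.sum_prod_type, Complex.sq_norm]

theorem toEuclidean_sub (A B : Tensor n1 n2 n3) :
    toEuclidean (A - B) = toEuclidean A - toEuclidean B := rfl

theorem toEuclidean_smul {R : Type*} [SMul R ℂ] (c : R) (A : Tensor n1 n2 n3) :
    toEuclidean (c • A) = c • toEuclidean A := rfl

theorem frob_sq (A : Tensor n1 n2 n3) :
    frob A ^ 2 = ∑ i, ∑ j, ∑ k, Complex.normSq (A i j k) :=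
  Real.sq_sqrt <| Finset.sum_nonneg fun _ _ => Finset.sum_nonneg fun _ _ =>
    Finset.sum_nonneg fun _ _ => Complex.normSq_nonneg _

theorem tinner_self (A : Tensor n1 n2 n3) : tinner A A = ((frob A ^ 2 : ℝ) : ℂ) := by
  simp only [frob_sq, tinner, Complex.ofReal_sum, Complex.normSq_eq_conj_mul_self]

section Slices

variable (Φ : Matrix (Fin n3) (Fin n3) ℂ)

theorem slice_add (A B : Tensor n1 n2 n3) (t : Fin n3) :
    slice Φ (A + B) t = slice Φ A t + slice Φ B t := by
  ext x y
  simp [slice, mul_add, Finset.sum_add_distrib]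

theorem slice_sub (A B : Tensor n1 n2 n3) (t : Fin n3) :
    slice Φ (A - B) t = slice Φ A t - slice Φ B t := by
  ext x y
  simp [slice, mul_sub, Finset.sum_sub_distrib]

theorem slice_unitTensor (i : Fin n1) (j : Fin n2) (k t : Fin n3) :
    slice Φ (unitTensor i j k) t = single i j (Φ t k) := by
  ext x y
  by_cases hx : x = i
  · by_cases hy : y = j
    · subst hx hy
      simp [slice, unitTensor]
    · simp [slice, unitTensor, hy, single_apply_of_col_ne _ _ (Ne.symm hy)]
  · simp [slice, unitTensor, hx, single_apply_of_row_ne (Ne.symm hx)]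

theorem slice_colBasis {n : ℕ} (i : Fin n) (k t : Fin n3) :
    slice Φ (colBasis i k) t = single i 0 (Φ t k) := by
  ext x y
  rw [Subsingleton.elim y 0]
  by_cases h : x = i
  · subst h
    simp [slice, colBasis]
  · simp [slice, colBasis, h, single_apply_of_row_ne (Ne.symm h)]

end Slices

section Unitary

variable {Φ : Matrix (Fin n3) (Fin n3) ℂ} (hΦ : Φ ∈ unitaryGroup (Fin n3) ℂ)
include hΦ

theorem slice_unslice (M : Fin n3 → Matrix (Fin n1) (Fin n2) ℂ) (t : Fin n3) :
    slice Φ (unslice Φ M) t = M t := by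
  have hΦΦ : Φ * Φᴴ = 1 := mem_unitaryGroup_iff.mp hΦ
  ext x y
  calc slice Φ (unslice Φ M) t x y = ∑ s, (Φ * Φᴴ) t s * M s x y := by
        simp only [slice, unslice, of_apply, mul_apply, conjTranspose_apply, Complex.star_def,
          Finset.mul_sum, Finset.sum_mul, mul_assoc]
        exact Finset.sum_comm
    _ = M t x y := by simp [hΦΦ, one_apply]

theorem slice_tprod (A : Tensor n1 n2 n3) (B : Tensor n2 n4 n3) (t : Fin n3) :
    slice Φ (tprod Φ A B) t = slice Φ A t * slice Φ B t :=
  slice_unslice hΦ _ t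

theorem slice_tconj (A : Tensor n1 n2 n3) (t : Fin n3) :
    slice Φ (tconj Φ A) t = (slice Φ A t)ᴴ :=
  slice_unslice hΦ _ t

theorem tinner_eq_sum_frobInner_slice (A B : Tensor n1 n2 n3) :
    tinner A B = ∑ t, (slice Φ A t).frobInner (slice Φ B t) := by
  have hparseval (x y : Fin n3 → ℂ) :
      star (Φ *ᵥ x) ⬝ᵥ (Φ *ᵥ y) = star x ⬝ᵥ y := by
    rw [star_mulVec, ← dotProduct_mulVec, mulVec_mulVec, ← star_eq_conjTranspose,
      mem_unitaryGroup_iff'.mp hΦ, one_mulVec]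
  have hslice (C : Tensor n1 n2 n3) t x y : slice Φ C t x y = (Φ *ᵥ C x y) t := rfl
  simp only [tinner, frobInner, hslice]
  conv_rhs => rw [Finset.sum_comm]
  refine Finset.sum_congr rfl fun x _ => ?_
  conv_rhs => rw [Finset.sum_comm]
  exact Finset.sum_congr rfl fun y _ => (hparseval (A x y) (B x y)).symm

theorem frob_sq_eq_sum_frobNormSq_slice (A : Tensor n1 n2 n3) :
    frob A ^ 2 = ∑ t, (slice Φ A t).frobNormSq := by
  have h := tinner_eq_sum_frobInner_slice hΦ A A
  simp only [frobInner_self, tinner_self] at h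
  exact_mod_cast h

theorem slice_projT (U : Tensor n1 r n3) (V : Tensor n2 r n3) (X : Tensor n1 n2 n3)
    (t : Fin n3) :
    slice Φ (projT Φ U V X) t = tangentProj
      (slice Φ U t * (slice Φ U t)ᴴ) (slice Φ V t * (slice Φ V t)ᴴ) (slice Φ X t) := by
  simp only [projT, tangentProj, slice_sub, slice_add, slice_tprod hΦ, slice_tconj hΦ]

theorem re_tinner_projT_self_le (U : Tensor n1 r n3) (V : Tensor n2 r n3)
    (A : Tensor n1 n2 n3) :
    (tinner (projT Φ U V A) A).re ≤
      ∑ t, (((slice Φ U t)ᴴ * slice Φ A t).frobNormSq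
        + (slice Φ A t * slice Φ V t).frobNormSq) := by
  rw [tinner_eq_sum_frobInner_slice hΦ, Complex.re_sum]
  gcongr with t
  rw [slice_projT hΦ]
  exact re_frobInner_tangentProj_self_le _ _ _

variable {U : Tensor n1 r n3} {V : Tensor n2 r n3}
  (hU : ∀ t, (slice Φ U t)ᴴ * slice Φ U t = 1)
  (hV : ∀ t, (slice Φ V t)ᴴ * slice Φ V t = 1)
include hU hV

theorem tinner_projT_projT (A X : Tensor n1 n2 n3) :
    tinner (projT Φ U V A) (projT Φ U V X) = tinner (projT Φ U V A) X := by
  simp only [tinner_eq_sum_frobInner_slice hΦ, slice_projT hΦ,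
    frobInner_tangentProj_tangentProj (isStarProjection_mul_conjTranspose_self (hU _))
      (isStarProjection_mul_conjTranspose_self (hV _))]

theorem frob_sq_projT_unitTensor_le (i : Fin n1) (j : Fin n2) (k : Fin n3) :
    frob (projT Φ U V (unitTensor i j k)) ^ 2 ≤
      frob (tprod Φ (tconj Φ U) (colBasis i k)) ^ 2
        + frob (tprod Φ (tconj Φ V) (colBasis j k)) ^ 2 := by
  have hP : frob (projT Φ U V (unitTensor i j k)) ^ 2
      = (tinner (projT Φ U V (unitTensor i j k)) (unitTensor i j k)).re := by
    rw [← tinner_projT_projT hΦ hU hV, tinner_self, Complex.ofReal_re]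
  rw [hP, frob_sq_eq_sum_frobNormSq_slice hΦ, frob_sq_eq_sum_frobNormSq_slice hΦ,
    ← Finset.sum_add_distrib]
  refine (re_tinner_projT_self_le hΦ U V _).trans_eq (Finset.sum_congr rfl fun t _ => ?_)
  simp only [slice_tprod hΦ, slice_tconj hΦ, slice_unitTensor, slice_colBasis,
    frobNormSq_mul_single, frobNormSq_single_mul, conjTranspose_apply, Complex.normSq_mul,
    Complex.star_def, Complex.normSq_conj, mul_comm]

theorem frob_sq_projT_unitTensor_le_of_incoherent {Z : Tensor n1 n2 n3} {μ : ℝ}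
    (hinc : Incoherent Φ Z U V μ) (hμ : 0 ≤ μ) (hn1 : 0 < n1) (hn2 : 0 < n2) (hn3 : 0 < n3)
    (i : Fin n1) (j : Fin n2) (k : Fin n3) :
    frob (projT Φ U V (unitTensor i j k)) ^ 2
      ≤ 2 * μ * (∑ t, ((slice Φ Z t).rank : ℝ)) / ((min n1 n2 : ℝ) * n3) := by
  set R := ∑ t, ((slice Φ Z t).rank : ℝ)
  have hμR : 0 ≤ μ * R := by positivity
  have h1 : μ * R / (n1 * n3) ≤ μ * R / ((min n1 n2 : ℝ) * n3) := by
    gcongr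
    exact min_le_left _ _
  have h2 : μ * R / (n2 * n3) ≤ μ * R / ((min n1 n2 : ℝ) * n3) := by
    gcongr
    exact min_le_right _ _
  calc frob (projT Φ U V (unitTensor i j k)) ^ 2
      ≤ frob (tprod Φ (tconj Φ U) (colBasis i k)) ^ 2
        + frob (tprod Φ (tconj Φ V) (colBasis j k)) ^ 2 :=
        frob_sq_projT_unitTensor_le hΦ hU hV i j k
    _ ≤ μ * R / (n1 * n3) + μ * R / (n2 * n3) := add_le_add (hinc.1 i k) (hinc.2 j k)
    _ ≤ μ * R / ((min n1 n2 : ℝ) * n3) + μ * R / ((min n1 n2 : ℝ) * n3) := add_le_add h1 h2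
    _ = 2 * μ * R / ((min n1 n2 : ℝ) * n3) := by ring

theorem frob_smul_tinner_projT_sub_le (A X : Tensor n1 n2 n3) {s c : ℝ} (hs : 0 ≤ s)
    (hc : 0 ≤ c) :
    frob (s • (tinner (projT Φ U V A) X • projT Φ U V A) - c • projT Φ U V X)
      ≤ max (s * frob (projT Φ U V A) ^ 2) c * frob X := by
  set P := toEuclidean (projT Φ U V A)
  set Y := toEuclidean (projT Φ U V X)
  have hPY : tinner (projT Φ U V A) X = inner ℂ P Y := by
    rw [inner_toEuclidean, tinner_projT_projT hΦ hU hV]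
  have hYX : ‖Y‖ ≤ frob X := by
    rw [← norm_toEuclidean X]
    refine norm_le_of_inner_self_eq_inner (𝕜 := ℂ) ?_
    rw [inner_toEuclidean, inner_toEuclidean, tinner_projT_projT hΦ hU hV]
  calc frob (s • (tinner (projT Φ U V A) X • projT Φ U V A) - c • projT Φ U V X)
      = ‖((s : ℂ) * inner ℂ P Y) • P - (c : ℂ) • Y‖ := by
        rw [← norm_toEuclidean, toEuclidean_sub, toEuclidean_smul, toEuclidean_smul,
          toEuclidean_smul, hPY, RCLike.real_smul_eq_coe_smul (K := ℂ),
          RCLike.real_smul_eq_coe_smul (K := ℂ), smul_smul]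
        rfl
    _ ≤ max (s * ‖P‖ ^ 2) c * ‖Y‖ := norm_smul_inner_smul_sub_smul_le P Y hs hc
    _ ≤ max (s * frob (projT Φ U V A) ^ 2) c * frob X := by
        rw [norm_toEuclidean]
        gcongr

end Unitary

end Tensor

/-- operator-norm bound on T^{ijk}_δ − (1/(n1 n2 n3)) P_T. -/
theorem statement13 {n1 n2 n3 r : ℕ} (Φ : Matrix (Fin n3) (Fin n3) ℂ)
    (hΦ : Φ ∈ Matrix.unitaryGroup (Fin n3) ℂ)
    (Z : Tensor n1 n2 n3) (U : Tensor n1 r n3) (S : Tensor r r n3) (V : Tensor n2 r n3)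
    (hSVD : SkinnySVD Φ Z r U S V)
    (μ : ℝ) (hμ : 1 ≤ μ) (hinc : Incoherent Φ Z U V μ)
    (hrsum : 1 ≤ ∑ t, (slice Φ Z t).rank)
    (ρ : ℝ) (hρ0 : 0 < ρ) (hρ1 : ρ ≤ 1)
    (i : Fin n1) (j : Fin n2) (k : Fin n3) (δ : ℝ) (hδ : δ = 0 ∨ δ = 1) :
    opNorm (fun X : Tensor n1 n2 n3 =>
        (ρ⁻¹ * δ) • (tinner (projT Φ U V (unitTensor i j k)) X •
          projT Φ U V (unitTensor i j k))
        - ((n1 * n2 * n3 : ℝ))⁻¹ • projT Φ U V X)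
      ≤ 2 * μ * (∑ t, ((slice Φ Z t).rank : ℝ)) / ((min n1 n2 : ℝ) * n3 * ρ) := by
  obtain ⟨hn1, hn2, hn3⟩ := pos_of_one_le_sum_rank _ hrsum
  have hR : (1 : ℝ) ≤ ∑ t, ((slice Φ Z t).rank : ℝ) := by exact_mod_cast hrsum
  set R := ∑ t, ((slice Φ Z t).rank : ℝ)
  set B := 2 * μ * R / ((min n1 n2 : ℝ) * n3 * ρ)
  set p := frob (projT Φ U V (unitTensor i j k)) ^ 2
  have hs : 0 ≤ ρ⁻¹ * δ := by rcases hδ with rfl | rfl <;> positivity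
  have hsB : ρ⁻¹ * δ * p ≤ B := by
    have hp := frob_sq_projT_unitTensor_le_of_incoherent hΦ hSVD.U_orth hSVD.V_orth hinc
      (by linarith) hn1 hn2 hn3 i j k
    have hδ1 : δ ≤ 1 := by rcases hδ with rfl | rfl <;> norm_num
    calc ρ⁻¹ * δ * p ≤ ρ⁻¹ * 1 * (2 * μ * R / ((min n1 n2 : ℝ) * n3)) := by gcongr
      _ = B := by ring
  have hcB : ((n1 * n2 * n3 : ℝ))⁻¹ ≤ B := by
    have hden : (min n1 n2 : ℝ) * n3 * ρ ≤ n1 * n2 * n3 :=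
      calc (min n1 n2 : ℝ) * n3 * ρ ≤ n1 * n3 * 1 := by gcongr; exact min_le_left _ _
        _ = n1 * 1 * n3 := by ring
        _ ≤ n1 * n2 * n3 := by gcongr; exact_mod_cast hn2
    calc ((n1 * n2 * n3 : ℝ))⁻¹ ≤ ((min n1 n2 : ℝ) * n3 * ρ)⁻¹ := by gcongr
      _ = 1 / ((min n1 n2 : ℝ) * n3 * ρ) := inv_eq_one_div _
      _ ≤ B := div_le_div_of_nonneg_right (by nlinarith) (by positivity)
  refine Real.sSup_le ?_ (by positivity)
  rintro _ ⟨X, hX, rfl⟩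
  calc _ ≤ max (ρ⁻¹ * δ * p) (n1 * n2 * n3 : ℝ)⁻¹ * frob X :=
        frob_smul_tinner_projT_sub_le hΦ hSVD.U_orth hSVD.V_orth _ X hs (by positivity)
    _ ≤ max (ρ⁻¹ * δ * p) (n1 * n2 * n3 : ℝ)⁻¹ :=
        mul_le_of_le_one_right (le_max_of_le_right (by positivity)) hX
    _ ≤ B := max_le hsB hcB
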